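/- Let (G,σ) be a signed graph. If (G,σ) is the union of two balanced eulerian subgraphs, i.e., there are subgraphs H_1 and H_2 of G, each with all vertex degrees even, such that E(H_1) ∪ E(H_2) = E(G) and (H_i, σ|_{H_i}) is balanced for i = 1,2, then F(G,σ) ≤ 4. -/

import Mathlib

open Finset

/-- A finite loopless multigraph with vertex type `V` and edge type `E`;
`ends e` is the unordered pair of the two distinct endpoints of the edge `e`. -/
structure Multigraph (V E : Type) where
  ends : E → Sym2 V
  not_loop : ∀ e, ¬ (ends e).IsDiag

namespace Multigraph

variable {V E : Type} [Fintype V] [Fintype E] [DecidableEq V] [DecidableEq E]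

/-- The edge `e` is incident with the vertex `v`. -/
def Inc (G : Multigraph V E) (v : V) (e : E) : Prop := v ∈ G.ends e

instance (G : Multigraph V E) (v : V) (e : E) : Decidable (G.Inc v e) :=
  inferInstanceAs (Decidable (v ∈ G.ends e))

/-- The set of edges incident with `v`. -/
def incEdges (G : Multigraph V E) (v : V) : Finset E :=
  Finset.univ.filter fun e => G.Inc v e

/-- The degree of a vertex. -/
def degree (G : Multigraph V E) (v : V) : ℕ := (G.incEdges v).card

/-- `G` is `k`-regular. -/
def IsRegular (G : Multigraph V E) (k : ℕ) : Prop := ∀ v, G.degree v = k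

/-- The set `N_σ` of negative edges of a signature `σ : E → ℤˣ`. -/
def negEdges (G : Multigraph V E) (σ : E → ℤˣ) : Finset E :=
  Finset.univ.filter fun e => σ e = -1

/-- `τ` assigns a sign to every half-edge (i.e. to each edge at each of its endpoints);
it is an orientation of the signed graph `(G, σ)` if for every edge `e = uv` the two
half-edge signs multiply to `-σ e`. -/
def IsOrientation (G : Multigraph V E) (σ : E → ℤˣ) (τ : E → V → ℤˣ) : Prop :=
  ∀ e u v, G.ends e = s(u, v) → τ e u * τ e v = - σ e

/-- The boundary `δf(v) = ∑_{h at v} τ(h) f(e_h)` of `f` at `v`. -/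
def boundary {R : Type} [CommRing R] (G : Multigraph V E) (τ : E → V → ℤˣ)
    (f : E → R) (v : V) : R :=
  ∑ e ∈ G.incEdges v, (((τ e v : ℤˣ) : ℤ) : R) * f e

/-- `f` is a nowhere-zero `r`-flow on the signed graph `(G, σ)`:
for some orientation all boundaries vanish and `1 ≤ |f e| ≤ r - 1` for every edge. -/
def IsNZFlow (G : Multigraph V E) (σ : E → ℤˣ) (r : ℝ) (f : E → ℝ) : Prop :=
  ∃ τ, G.IsOrientation σ τ ∧ (∀ v, G.boundary τ f v = 0) ∧
    ∀ e, 1 ≤ |f e| ∧ |f e| ≤ r - 1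

/-- `(G, σ)` admits a nowhere-zero `r`-flow. -/
def HasNZFlow (G : Multigraph V E) (σ : E → ℤˣ) (r : ℝ) : Prop :=
  ∃ f, G.IsNZFlow σ r f

/-- `f` is a modular nowhere-zero `r`-flow on `(G, σ)`: for some orientation all
boundaries are `≡ 0 (mod r)` and `1 ≤ |f e| ≤ r - 1` for every edge. -/
def IsModularNZFlow (G : Multigraph V E) (σ : E → ℤˣ) (r : ℝ) (f : E → ℝ) : Prop :=
  ∃ τ, G.IsOrientation σ τ ∧ (∀ v, ∃ k : ℤ, G.boundary τ f v = k * r) ∧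
    ∀ e, 1 ≤ |f e| ∧ |f e| ≤ r - 1

/-- `f` is an integer-valued nowhere-zero `n`-flow on `(G, σ)`. -/
def IsIntNZFlow (G : Multigraph V E) (σ : E → ℤˣ) (n : ℕ) (f : E → ℤ) : Prop :=
  ∃ τ, G.IsOrientation σ τ ∧ (∀ v, G.boundary τ f v = 0) ∧
    ∀ e, 1 ≤ |f e| ∧ |f e| ≤ (n : ℤ) - 1

/-- `(G, σ)` admits an integer nowhere-zero `n`-flow. -/
def HasIntNZFlow (G : Multigraph V E) (σ : E → ℤˣ) (n : ℕ) : Prop :=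
  ∃ f, G.IsIntNZFlow σ n f

/-- `(G, σ)` is flow-admissible: it has a nowhere-zero `r`-flow for some `r ≥ 2`. -/
def FlowAdmissible (G : Multigraph V E) (σ : E → ℤˣ) : Prop :=
  ∃ r : ℝ, 2 ≤ r ∧ G.HasNZFlow σ r

/-- The circular flow number `F_c(G, σ)` (the least `r` admitting a nowhere-zero `r`-flow). -/
noncomputable def Fc (G : Multigraph V E) (σ : E → ℤˣ) : ℝ :=
  sInf {r : ℝ | 2 ≤ r ∧ G.HasNZFlow σ r}

/-- The integer flow number `F(G, σ)` (the least `n` admitting an integer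
nowhere-zero `n`-flow). -/
noncomputable def Fi (G : Multigraph V E) (σ : E → ℤˣ) : ℕ :=
  sInf {n : ℕ | G.HasIntNZFlow σ n}

/-- The flow spectrum `S(G)` of `G`. -/
def Spectrum (G : Multigraph V E) : Set ℝ :=
  {r | ∃ σ : E → ℤˣ, G.FlowAdmissible σ ∧ G.Fc σ = r}

/-- The integer flow spectrum `S̄(G)` of `G`. -/
def IntSpectrum (G : Multigraph V E) : Set ℕ :=
  {n | ∃ σ : E → ℤˣ, G.FlowAdmissible σ ∧ G.Fi σ = n}

/-- `F` is the edge set of a spanning `t`-regular subgraph (a `t`-factor) of `G`. -/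
def IsFactor (G : Multigraph V E) (t : ℕ) (F : Finset E) : Prop :=
  ∀ v, (G.incEdges v ∩ F).card = t

/-- `G` has a `t`-factor. -/
def HasFactor (G : Multigraph V E) (t : ℕ) : Prop := ∃ F, G.IsFactor t F

/-- `G - X` is bipartite. -/
def BipartiteOff (G : Multigraph V E) (X : Finset E) : Prop :=
  ∃ c : V → Bool, ∀ e ∉ X, ∀ u v, G.ends e = s(u, v) → c u ≠ c v

/-- `G` is bipartite. -/
def Bipartite (G : Multigraph V E) : Prop := G.BipartiteOff ∅

/-- `X` is an `r`-minimal set: some signature `σ` with `N_σ = X` has circular flow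
number `r`, while no signature whose negative edge set is a proper subset of `X`
has circular flow number `r`. -/
def IsRMinimal (G : Multigraph V E) (r : ℝ) (X : Finset E) : Prop :=
  (∃ σ, G.negEdges σ = X ∧ G.FlowAdmissible σ ∧ G.Fc σ = r) ∧
  ∀ σ, G.negEdges σ ⊂ X → ¬ (G.FlowAdmissible σ ∧ G.Fc σ = r)

/-- `X` is an `r`-minimal set of minimum cardinality. -/
def IsSmallestRMinimal (G : Multigraph V E) (r : ℝ) (X : Finset E) : Prop :=
  G.IsRMinimal r X ∧ ∀ Y, G.IsRMinimal r Y → X.card ≤ Y.card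

/-- `u` and `v` are joined by an edge belonging to the edge set `F`. -/
def AdjOn (G : Multigraph V E) (F : Finset E) (u v : V) : Prop :=
  ∃ e ∈ F, G.ends e = s(u, v)

/-- `u` and `v` are connected in the spanning subgraph with edge set `F`. -/
def ReachOn (G : Multigraph V E) (F : Finset E) : V → V → Prop :=
  Relation.ReflTransGen (G.AdjOn F)

/-- The connected component of `v` in the spanning subgraph with edge set `F`. -/
def componentOn (G : Multigraph V E) (F : Finset E) (v : V) : Set V :=
  {u | G.ReachOn F v u}

/-- The number of connected components of odd cardinality of the spanning subgraph
with edge set `F`.  For a `2`-factor `F` these components are precisely the odd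
circuits of the `2`-factor. -/
noncomputable def numOddComponents (G : Multigraph V E) (F : Finset E) : ℕ :=
  Nat.card {S : Set V // (∃ v, S = G.componentOn F v) ∧ Odd (Nat.card S)}

/-- The oddness `ω(G)`: the minimum number of odd circuits in a `2`-factor of `G`. -/
noncomputable def oddness (G : Multigraph V E) : ℕ :=
  sInf {k | ∃ F, G.IsFactor 2 F ∧ G.numOddComponents F = k}

/-- `e` is a bridge: its endpoints are disconnected after deleting `e`. -/
def IsBridge (G : Multigraph V E) (e : E) : Prop :=
  ∀ u v, G.ends e = s(u, v) → ¬ G.ReachOn (Finset.univ.erase e) u v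

/-- `G` has no bridge. -/
def Bridgeless (G : Multigraph V E) : Prop := ∀ e, ¬ G.IsBridge e

/-- `c` is a proper edge coloring: edges sharing an endpoint get distinct colors. -/
def IsProperEdgeColoring (G : Multigraph V E) {k : ℕ} (c : E → Fin k) : Prop :=
  ∀ e₁ e₂, e₁ ≠ e₂ → (∃ v, G.Inc v e₁ ∧ G.Inc v e₂) → c e₁ ≠ c e₂

/-- `G` is 3-edge-colorable. -/
def ThreeEdgeColorable (G : Multigraph V E) : Prop :=
  ∃ c : E → Fin 3, G.IsProperEdgeColoring c

/-- The resistance `r(G)`: the minimum cardinality of a color class, over all proper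
4-edge-colorings of `G`. -/
noncomputable def resistance (G : Multigraph V E) : ℕ :=
  sInf {k | ∃ c : E → Fin 4, G.IsProperEdgeColoring c ∧
    ∃ i : Fin 4, (Finset.univ.filter fun e => c e = i).card = k}

/-- Since our multigraphs are loopless, `G` is (isomorphic to) `K₂³` — the cubic graph
on two vertices joined by three parallel edges — iff it has exactly two vertices
and three edges. -/
def IsK23 (G : Multigraph V E) : Prop :=
  Fintype.card V = 2 ∧ Fintype.card E = 3

/-- `S` is an independent set of vertices (no edge joins two of its members). -/
def IsIndepSet (G : Multigraph V E) (S : Finset V) : Prop :=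
  ∀ u ∈ S, ∀ v ∈ S, ∀ e : E, G.ends e ≠ s(u, v)

/-- The independence number `α(G)`. -/
noncomputable def indepNum (G : Multigraph V E) : ℕ :=
  sSup {k | ∃ S : Finset V, G.IsIndepSet S ∧ S.card = k}

/-- The maximum degree `Δ(G[X])` of the subgraph of `G` induced by the edge set `X`. -/
def maxDegreeOn (G : Multigraph V E) (X : Finset E) : ℕ :=
  Finset.univ.sup fun v => (G.incEdges v ∩ X).card

/-- A circuit of `G` of length `n + 1`: pairwise distinct vertices `v_0, …, v_n` and
pairwise distinct edges `e_0, …, e_n` with `e_i` joining `v_i` and `v_{i+1}`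
(indices mod `n + 1`). -/
structure Circuit (G : Multigraph V E) where
  n : ℕ
  vert : Fin (n + 1) → V
  edge : Fin (n + 1) → E
  vert_inj : Function.Injective vert
  edge_inj : Function.Injective edge
  ends_eq : ∀ i, G.ends (edge i) = s(vert i, vert (i + 1))

/-- The number of negative edges on a circuit. -/
def Circuit.negCount {G : Multigraph V E} (σ : E → ℤˣ) (C : G.Circuit) : ℕ :=
  (Finset.univ.filter fun i => σ (C.edge i) = -1).card

/-- The subgraph of `(G, σ)` with edge set `F` is balanced: every circuit using only
edges of `F` contains an even number of negative edges. -/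
def BalancedOn (G : Multigraph V E) (σ : E → ℤˣ) (F : Finset E) : Prop :=
  ∀ C : G.Circuit, (∀ i, C.edge i ∈ F) → Even (C.negCount σ)

end Multigraph

/-!
A balanced eulerian edge set `F` can be oriented so that the constant function `1` on `F` is a
flow. Indeed `F` decomposes into circuits: an even subgraph contains a circuit (extend a path until
its last vertex sees the path again), and removing it leaves an even subgraph. A circuit with an
even number of negative edges can be oriented so that the two half-edges at each of its vertices
cancel.

With such orientations `τ₁` of `E₁` and `τ₂` of `E₂`, the sign `ε = τ₁ τ₂` is the same at both ends
of an edge, so `ε` on `E₂` is a flow for `τ₁`. Then `1_{E₁} + 2 ε 1_{E₂}` is a flow for `τ₁` with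
values in `{±1, ±2, ±3}`, as `E₁ ∪ E₂` covers every edge.
-/

lemma exists_cyclic_potential {M : Type*} [CommGroup M] {n : ℕ} (s : Fin (n + 1) → M)
    (hs : ∏ i, s i = 1) : ∃ t : Fin (n + 1) → M, ∀ i, t (i + 1) = s i * t i := by
  refine ⟨fun k => ∏ j ∈ Iio k, s j, fun i => ?_⟩
  dsimp only
  rcases (Fin.le_last i).eq_or_lt with rfl | hi
  · have hIio : Iio (Fin.last n) = univ.erase (Fin.last n) := by
      ext j; simp only [mem_Iio, mem_erase, mem_univ, and_true, Fin.lt_last_iff_ne_last]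
    rw [Fin.last_add_one, hIio, mul_prod_erase _ _ (mem_univ _), hs]
    exact prod_eq_one fun j hj => absurd (mem_Iio.mp hj) (Fin.not_lt_zero j)
  · have hIio : Iio (i + 1) = insert i (Iio i) := by
      ext j
      simp only [mem_Iio, mem_insert, Fin.lt_def, Fin.val_add_one_of_lt hi, Fin.ext_iff]
      omega
    rw [hIio, prod_insert (by simp)]

namespace Multigraph

variable {V E : Type} {G : Multigraph V E} {F : Finset E}

lemma ne_of_ends_eq {e : E} {u v : V} (h : G.ends e = s(u, v)) : u ≠ v := by
  rintro rfl
  exact G.not_loop e (h ▸ Sym2.mk_isDiag_iff.mpr rfl)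

lemma exists_ends_eq (e : E) : ∃ u v, G.ends e = s(u, v) := by
  induction h : G.ends e using Sym2.ind with
  | _ u v => exact ⟨u, v, rfl⟩

lemma isOrientation_of_exists {σ : E → ℤˣ} {τ : E → V → ℤˣ}
    (h : ∀ e, ∃ u v, G.ends e = s(u, v) ∧ τ e u * τ e v = -σ e) : G.IsOrientation σ τ := by
  intro e u v he
  obtain ⟨a, b, hab, hτ⟩ := h e
  rcases Sym2.eq_iff.mp (he.symm.trans hab) with ⟨rfl, rfl⟩ | ⟨rfl, rfl⟩
  · exact hτ
  · rwa [mul_comm]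

lemma exists_isOrientation [DecidableEq V] (σ : E → ℤˣ) : ∃ τ, G.IsOrientation σ τ := by
  choose u v huv using fun e => G.exists_ends_eq e
  refine ⟨fun e w => if w = u e then 1 else -σ e, isOrientation_of_exists fun e => ?_⟩
  refine ⟨u e, v e, huv e, ?_⟩
  simp [(ne_of_ends_eq (huv e)).symm]

lemma IsOrientation.exists_mul_eq {σ : E → ℤˣ} {τ₁ τ₂ : E → V → ℤˣ}
    (h₁ : G.IsOrientation σ τ₁) (h₂ : G.IsOrientation σ τ₂) :
    ∃ ε : E → ℤˣ, ∀ e v, v ∈ G.ends e → τ₁ e v * ε e = τ₂ e v := by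
  choose u w huw using fun e => G.exists_ends_eq e
  refine ⟨fun e => τ₁ e (u e) * τ₂ e (u e), fun e v hv => ?_⟩
  have hprod : τ₁ e (u e) * τ₁ e (w e) = τ₂ e (u e) * τ₂ e (w e) :=
    (h₁ e _ _ (huw e)).trans (h₂ e _ _ (huw e)).symm
  rw [huw e, Sym2.mem_iff] at hv
  rcases hv with rfl | rfl
  · rw [← mul_assoc, Int.units_mul_self, one_mul]
  · calc τ₁ e (w e) * (τ₁ e (u e) * τ₂ e (u e))
        = τ₁ e (u e) * τ₁ e (w e) * τ₂ e (u e) := by rw [mul_left_comm, mul_assoc]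
      _ = τ₂ e (w e) * (τ₂ e (u e) * τ₂ e (u e)) := by rw [hprod]; ac_rfl
      _ = τ₂ e (w e) := by rw [Int.units_mul_self, mul_one]

lemma Circuit.n_ne_zero (C : G.Circuit) : C.n ≠ 0 := by
  intro h
  have hwrap : (0 : Fin (C.n + 1)) + 1 = 0 := Fin.ext (by simp [h])
  exact ne_of_ends_eq (C.ends_eq 0) (by rw [hwrap])

lemma Circuit.one_ne_zero (C : G.Circuit) : (1 : Fin (C.n + 1)) ≠ 0 :=
  have : NeZero C.n := ⟨C.n_ne_zero⟩
  Fin.one_pos'.ne'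

lemma Circuit.sub_one_ne (C : G.Circuit) (k : Fin (C.n + 1)) : k - 1 ≠ k :=
  fun h => C.one_ne_zero (sub_eq_self.mp h)

lemma Circuit.add_one_ne (C : G.Circuit) (k : Fin (C.n + 1)) : k + 1 ≠ k :=
  fun h => C.one_ne_zero (add_eq_left.mp h)

lemma Circuit.prod_sigma_eq_one {σ : E → ℤˣ} {C : G.Circuit} (h : Even (C.negCount σ)) :
    ∏ i, σ (C.edge i) = 1 := by
  have hσ : ∀ i, σ (C.edge i) = (-1) ^ (if σ (C.edge i) = -1 then 1 else 0) := fun i => by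
    rcases Int.units_eq_one_or (σ (C.edge i)) with h | h <;> simp [h]
  rw [prod_congr rfl fun i _ => hσ i, prod_pow_eq_pow_sum, ← card_filter]
  exact h.neg_one_pow

/-- A path in `F` with distinct vertices; `vert` and `edge` only matter on `0, …, len` and
`0, …, len - 1`. -/
structure PathIn (G : Multigraph V E) (F : Finset E) where
  len : ℕ
  vert : ℕ → V
  edge : ℕ → E
  vert_injOn : Set.InjOn vert (Set.Iic len)
  edge_mem : ∀ i < len, edge i ∈ F
  ends_eq : ∀ i < len, G.ends (edge i) = s(vert i, vert (i + 1))

namespace PathIn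

lemma eq_of_vert_eq (P : G.PathIn F) {a b : ℕ} (ha : a ≤ P.len) (hb : b ≤ P.len)
    (h : P.vert a = P.vert b) : a = b :=
  P.vert_injOn (Set.mem_Iic.mpr ha) (Set.mem_Iic.mpr hb) h

lemma len_lt_card [Fintype V] (P : G.PathIn F) : P.len < Fintype.card V := by
  have h := Fintype.card_le_of_injective (fun i : Fin (P.len + 1) => P.vert i) fun i j hij =>
    Fin.ext (P.eq_of_vert_eq (Nat.lt_succ_iff.mp i.2) (Nat.lt_succ_iff.mp j.2) hij)
  simpa using h

lemma edge_injOn (P : G.PathIn F) : Set.InjOn P.edge (Set.Iio P.len) := by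
  intro i (hi : i < P.len) j (hj : j < P.len) hij
  have hends := (P.ends_eq i hi).symm.trans (hij ▸ P.ends_eq j hj)
  rcases Sym2.eq_iff.mp hends with ⟨h, -⟩ | ⟨h₁, h₂⟩
  · exact P.eq_of_vert_eq hi.le hj.le h
  · have := P.eq_of_vert_eq hi.le hj h₁
    have := P.eq_of_vert_eq hi hj.le h₂
    omega

lemma exists_len_eq_one (hF : F.Nonempty) : ∃ P : G.PathIn F, P.len = 1 := by
  obtain ⟨e, he⟩ := hF
  obtain ⟨u, v, huv⟩ := G.exists_ends_eq e
  refine ⟨⟨1, fun i => if i = 0 then u else v, fun _ => e, ?_, fun _ _ => he, ?_⟩, rfl⟩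
  · intro i (hi : i ≤ 1) j (hj : j ≤ 1) hij
    interval_cases i <;> interval_cases j <;>
      simp_all [ne_of_ends_eq huv, (ne_of_ends_eq huv).symm]
  · intro i hi
    obtain rfl : i = 0 := by omega
    exact huv

def drop (P : G.PathIn F) (i : ℕ) (hi : i ≤ P.len) : G.PathIn F where
  len := P.len - i
  vert j := P.vert (i + j)
  edge j := P.edge (i + j)
  vert_injOn j₁ (hj₁ : j₁ ≤ P.len - i) j₂ (hj₂ : j₂ ≤ P.len - i) h := by
    have := P.eq_of_vert_eq (a := i + j₁) (b := i + j₂) (by omega) (by omega) h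
    omega
  edge_mem j hj := P.edge_mem _ (by omega)
  ends_eq j hj := P.ends_eq _ (by omega)

def snoc (P : G.PathIn F) {e : E} (he : e ∈ F) {w : V}
    (hends : G.ends e = s(P.vert P.len, w)) (hw : w ∉ P.vert '' Set.Iic P.len) : G.PathIn F where
  len := P.len + 1
  vert i := if i = P.len + 1 then w else P.vert i
  edge i := if i = P.len then e else P.edge i
  vert_injOn i (hi : i ≤ P.len + 1) j (hj : j ≤ P.len + 1) hij := by
    have hw' : ∀ k ≤ P.len, P.vert k ≠ w := fun k hk h => hw ⟨k, hk, h⟩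
    dsimp only at hij
    split_ifs at hij with h₁ h₂ h₂
    · omega
    · exact absurd hij.symm (hw' j (by omega))
    · exact absurd hij (hw' i (by omega))
    · exact P.eq_of_vert_eq (by omega) (by omega) hij
  edge_mem i hi := by
    split_ifs with h
    · exact he
    · exact P.edge_mem i (by omega)
  ends_eq i hi := by
    by_cases h : i = P.len
    · simp [h, hends]
    · rw [if_neg h, if_neg (by omega), if_neg (by omega)]
      exact P.ends_eq i (by omega)

lemma exists_circuit_of_ends_eq (P : G.PathIn F) {e : E} (he : e ∈ F)
    (hends : G.ends e = s(P.vert P.len, P.vert 0)) (hne : ∀ j < P.len, P.edge j ≠ e) :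
    ∃ C : G.Circuit, ∀ i, C.edge i ∈ F := by
  have hle : ∀ i : Fin (P.len + 1), (i : ℕ) ≤ P.len := fun i => Nat.lt_succ_iff.mp i.2
  have hlt : ∀ i : Fin (P.len + 1), (i : ℕ) ≠ P.len → (i : ℕ) < P.len := fun i hi =>
    lt_of_le_of_ne (hle i) hi
  refine ⟨⟨P.len, fun i => P.vert i, fun i => if (i : ℕ) = P.len then e else P.edge i,
    fun i j h => Fin.ext (P.eq_of_vert_eq (hle i) (hle j) h), fun i j h => ?_, fun i => ?_⟩,
    fun i => ?_⟩
  · dsimp only at h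
    split_ifs at h with hi hj hj
    · exact Fin.ext (hi.trans hj.symm)
    · exact absurd h.symm (hne j (hlt j hj))
    · exact absurd h (hne i (hlt i hi))
    · exact Fin.ext (P.edge_injOn (hlt i hi) (hlt j hj) h)
  · split_ifs with hi
    · rw [show i = Fin.last P.len from Fin.ext hi, Fin.last_add_one, Fin.val_last]
      exact hends
    · rw [Fin.val_add_one_of_lt (Fin.lt_def.mpr (hlt i hi))]
      exact P.ends_eq i (hlt i hi)
  · dsimp only
    split_ifs with hi
    · exact he
    · exact P.edge_mem i (hlt i hi)

lemma edge_ne_of_vert_len_mem (P : G.PathIn F) {e : E} (he : P.vert P.len ∈ G.ends e)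
    (hne : e ≠ P.edge (P.len - 1)) : ∀ j < P.len, P.edge j ≠ e := by
  rintro j hj rfl
  rw [P.ends_eq j hj, Sym2.mem_iff] at he
  rcases he with h | h
  · have := P.eq_of_vert_eq le_rfl hj.le h
    omega
  · have := P.eq_of_vert_eq le_rfl hj h
    exact hne (by congr 1; omega)

end PathIn

lemma mem_incEdges [Fintype E] [DecidableEq V] {v : V} {e : E} :
    e ∈ G.incEdges v ↔ v ∈ G.ends e := by
  rw [incEdges, mem_filter]
  simp [Inc]

def Circuit.edges [DecidableEq E] (C : G.Circuit) : Finset E := univ.image C.edge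

lemma Circuit.mem_edges [DecidableEq E] {C : G.Circuit} {e : E} :
    e ∈ C.edges ↔ ∃ i, C.edge i = e := by
  simp [Circuit.edges]

section

variable [Fintype E] [DecidableEq V] [DecidableEq E]

/-- The constant function `1` on `F` has zero boundary with respect to `τ`. -/
def IsEulerianOn (τ : E → V → ℤˣ) (F : Finset E) : Prop :=
  ∀ v, ∑ e ∈ G.incEdges v ∩ F, ((τ e v : ℤˣ) : ℤ) = 0

lemma IsEulerianOn.congr {τ τ' : E → V → ℤˣ} (h : G.IsEulerianOn τ F)
    (hτ : ∀ e ∈ F, τ e = τ' e) : G.IsEulerianOn τ' F := fun v => by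
  rw [← h v]
  exact sum_congr rfl fun e he => by rw [hτ e (mem_inter.mp he).2]

lemma IsEulerianOn.union {τ : E → V → ℤˣ} {A B : Finset E} (hA : G.IsEulerianOn τ A)
    (hB : G.IsEulerianOn τ B) (hAB : Disjoint A B) : G.IsEulerianOn τ (A ∪ B) := fun v => by
  rw [inter_union_distrib_left, sum_union (disjoint_of_subset_left inter_subset_right
    (disjoint_of_subset_right inter_subset_right hAB)), hA v, hB v, add_zero]

lemma Circuit.incEdges_inter_edges_vert (C : G.Circuit) (k : Fin (C.n + 1)) :
    G.incEdges (C.vert k) ∩ C.edges = {C.edge (k - 1), C.edge k} := by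
  ext e
  simp only [mem_inter, mem_incEdges, C.mem_edges, mem_insert, mem_singleton]
  constructor
  · rintro ⟨hk, i, rfl⟩
    rw [C.ends_eq i, Sym2.mem_iff] at hk
    rcases hk with hk | hk
    · exact Or.inr (congrArg C.edge (C.vert_inj hk).symm)
    · exact Or.inl (by rw [C.vert_inj hk, add_sub_cancel_right])
  · rintro (rfl | rfl)
    · refine ⟨?_, _, rfl⟩
      rw [C.ends_eq, sub_add_cancel]
      exact Sym2.mem_mk_right _ _
    · exact ⟨C.ends_eq k ▸ Sym2.mem_mk_left _ _, _, rfl⟩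

lemma Circuit.incEdges_inter_edges_eq_empty (C : G.Circuit) {v : V} (hv : v ∉ Set.range C.vert) :
    G.incEdges v ∩ C.edges = ∅ := by
  ext e
  simp only [mem_inter, mem_incEdges, C.mem_edges, notMem_empty, iff_false]
  rintro ⟨hvi, i, rfl⟩
  rw [C.ends_eq i, Sym2.mem_iff] at hvi
  rcases hvi with rfl | rfl <;> exact hv ⟨_, rfl⟩

lemma Circuit.even_card_incEdges_inter_edges (C : G.Circuit) (v : V) :
    Even #(G.incEdges v ∩ C.edges) := by
  by_cases hv : v ∈ Set.range C.vert
  · obtain ⟨k, rfl⟩ := hv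
    rw [C.incEdges_inter_edges_vert, card_pair (C.edge_inj.ne (C.sub_one_ne k))]
    exact even_two
  · simp [C.incEdges_inter_edges_eq_empty hv]

/-- Walking along the circuit, the half-edge signs `t i` obey `t (i + 1) = σ (edge i) * t i`;
this closes up because the product of the signs around a balanced circuit is `1`. -/
lemma Circuit.exists_isOrientation_isEulerianOn (σ : E → ℤˣ) (C : G.Circuit)
    (hC : Even (C.negCount σ)) : ∃ τ, G.IsOrientation σ τ ∧ G.IsEulerianOn τ C.edges := by
  obtain ⟨t, ht⟩ := exists_cyclic_potential (fun i => σ (C.edge i)) (C.prod_sigma_eq_one hC)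
  obtain ⟨τ₀, hτ₀⟩ := G.exists_isOrientation σ
  let τC : Fin (C.n + 1) → V → ℤˣ := fun i w => if w = C.vert i then t i else -σ (C.edge i) * t i
  have hτC_vert : ∀ i, τC i (C.vert i) = t i := fun i => if_pos rfl
  have hτC_vert_succ : ∀ i, τC i (C.vert (i + 1)) = -σ (C.edge i) * t i := fun i =>
    if_neg (C.vert_inj.ne (C.add_one_ne i))
  refine ⟨Function.extend C.edge τC τ₀, isOrientation_of_exists fun e => ?_, fun v => ?_⟩
  · by_cases he : ∃ i, C.edge i = e
    · obtain ⟨i, rfl⟩ := he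
      refine ⟨C.vert i, C.vert (i + 1), C.ends_eq i, ?_⟩
      rw [C.edge_inj.extend_apply, hτC_vert, hτC_vert_succ, mul_left_comm, Int.units_mul_self,
        mul_one]
    · obtain ⟨u, w, huw⟩ := G.exists_ends_eq e
      exact ⟨u, w, huw, by rw [Function.extend_apply' _ _ _ he]; exact hτ₀ e u w huw⟩
  · by_cases hv : v ∈ Set.range C.vert
    · obtain ⟨k, rfl⟩ := hv
      rw [C.incEdges_inter_edges_vert, sum_pair (C.edge_inj.ne (C.sub_one_ne k)),
        C.edge_inj.extend_apply, C.edge_inj.extend_apply]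
      have hk := hτC_vert_succ (k - 1)
      rw [sub_add_cancel] at hk
      rw [hk, hτC_vert, ← sub_add_cancel k 1, ht, sub_add_cancel]
      push_cast
      ring
    · simp [C.incEdges_inter_edges_eq_empty hv]

lemma PathIn.exists_circuit_or_len_eq_succ (P : G.PathIn F) (hP : 0 < P.len)
    (heven : ∀ v, Even #(G.incEdges v ∩ F)) :
    (∃ C : G.Circuit, ∀ i, C.edge i ∈ F) ∨ ∃ P' : G.PathIn F, P'.len = P.len + 1 := by
  have hlast : G.ends (P.edge (P.len - 1)) = s(P.vert (P.len - 1), P.vert P.len) := by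
    have h := P.ends_eq (P.len - 1) (by omega)
    rwa [Nat.sub_add_cancel hP] at h
  have hmem : P.edge (P.len - 1) ∈ G.incEdges (P.vert P.len) ∩ F :=
    mem_inter.mpr ⟨mem_incEdges.mpr (hlast ▸ Sym2.mem_mk_right _ _), P.edge_mem _ (by omega)⟩
  have hcard : 1 < #(G.incEdges (P.vert P.len) ∩ F) := by
    obtain ⟨r, hr⟩ := heven (P.vert P.len)
    have := card_pos.mpr ⟨_, hmem⟩
    omega
  obtain ⟨e, he, hne⟩ := exists_mem_ne hcard (P.edge (P.len - 1))
  rw [mem_inter, mem_incEdges] at he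
  obtain ⟨w, hw⟩ := Sym2.mem_iff_exists.mp he.1
  have hnew := P.edge_ne_of_vert_len_mem he.1 hne
  by_cases hw' : w ∈ P.vert '' Set.Iic P.len
  · obtain ⟨i, hi, rfl⟩ := hw'
    have hi' : i ≠ P.len := by
      rintro rfl
      exact ne_of_ends_eq hw rfl
    refine Or.inl ((P.drop i hi).exists_circuit_of_ends_eq he.2 ?_ fun j hj => hnew _ ?_)
    · change G.ends e = s(P.vert (i + (P.len - i)), P.vert (i + 0))
      rwa [Nat.add_sub_cancel' hi, add_zero]
    · change j < P.len - i at hj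
      omega
  · exact Or.inr ⟨P.snoc he.2 hw hw', rfl⟩

lemma exists_circuit_of_even [Fintype V]
    (heven : ∀ v, Even #(G.incEdges v ∩ F)) (hF : F.Nonempty) :
    ∃ C : G.Circuit, ∀ i, C.edge i ∈ F := by
  by_contra hC
  have hpath : ∀ m, ∃ P : G.PathIn F, P.len = m + 1 := by
    intro m
    induction m with
    | zero => exact PathIn.exists_len_eq_one hF
    | succ m ih =>
      obtain ⟨P, hP⟩ := ih
      rw [← hP]
      exact (P.exists_circuit_or_len_eq_succ (by omega) heven).resolve_left hC
  obtain ⟨P, hP⟩ := hpath (Fintype.card V)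
  have := P.len_lt_card
  omega

lemma exists_isOrientation_isEulerianOn [Fintype V] (σ : E → ℤˣ)
    (heven : ∀ v, Even #(G.incEdges v ∩ F)) (hbal : G.BalancedOn σ F) :
    ∃ τ, G.IsOrientation σ τ ∧ G.IsEulerianOn τ F := by
  induction F using Finset.strongInduction with
  | H F ih =>
  rcases F.eq_empty_or_nonempty with rfl | hF
  · obtain ⟨τ, hτ⟩ := G.exists_isOrientation σ
    exact ⟨τ, hτ, fun v => by simp⟩
  obtain ⟨C, hCF⟩ := exists_circuit_of_even heven hF
  have hsub : C.edges ⊆ F := fun e he => by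
    obtain ⟨i, rfl⟩ := C.mem_edges.mp he
    exact hCF i
  have heven' : ∀ v, Even #(G.incEdges v ∩ (F \ C.edges)) := fun v => by
    have hsplit : G.incEdges v ∩ (F \ C.edges) =
        (G.incEdges v ∩ F) \ (G.incEdges v ∩ C.edges) := inf_sdiff_distrib_left _ _ _
    rw [hsplit, card_sdiff_of_subset (inter_subset_inter_left hsub)]
    exact (heven v).tsub (C.even_card_incEdges_inter_edges v)
  obtain ⟨τ', hτ', hτ'F⟩ := ih (F \ C.edges)
    (sdiff_ssubset hsub ⟨_, C.mem_edges.mpr ⟨0, rfl⟩⟩) heven'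
    fun C' h => hbal C' fun i => (mem_sdiff.mp (h i)).1
  obtain ⟨τC, hτC, hCeul⟩ := C.exists_isOrientation_isEulerianOn σ (hbal C hCF)
  refine ⟨fun e => if e ∈ C.edges then τC e else τ' e, fun e u v h => ?_, ?_⟩
  · dsimp only
    split_ifs
    exacts [hτC e u v h, hτ' e u v h]
  · rw [← union_sdiff_of_subset hsub]
    exact (hCeul.congr fun e he => (if_pos he).symm).union
      (hτ'F.congr fun e he => (if_neg (mem_sdiff.mp he).2).symm) disjoint_sdiff

lemma hasIntNZFlow_four_of_isEulerianOn {σ : E → ℤˣ} {τ₁ τ₂ : E → V → ℤˣ} {E₁ E₂ : Finset E}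
    (h₁ : G.IsOrientation σ τ₁) (h₂ : G.IsOrientation σ τ₂) (hE₁ : G.IsEulerianOn τ₁ E₁)
    (hE₂ : G.IsEulerianOn τ₂ E₂) (hcover : E₁ ∪ E₂ = univ) : G.HasIntNZFlow σ 4 := by
  obtain ⟨ε, hε⟩ := h₁.exists_mul_eq h₂
  refine ⟨fun e => (if e ∈ E₁ then 1 else 0) + 2 * (if e ∈ E₂ then (ε e : ℤ) else 0),
    τ₁, h₁, fun v => ?_, fun e => ?_⟩
  · have hterm : ∀ e ∈ G.incEdges v,
        (τ₁ e v : ℤ) * ((if e ∈ E₁ then 1 else 0) + 2 * (if e ∈ E₂ then (ε e : ℤ) else 0)) =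
          (if e ∈ E₁ then (τ₁ e v : ℤ) else 0) + 2 * (if e ∈ E₂ then (τ₂ e v : ℤ) else 0) := by
      intro e he
      rw [← hε e v (mem_incEdges.mp he)]
      push_cast
      split_ifs <;> ring
    rw [boundary]
    simp only [Int.cast_id]
    rw [sum_congr rfl hterm, sum_add_distrib, ← mul_sum, sum_ite_mem, sum_ite_mem, hE₁ v, hE₂ v,
      mul_zero, add_zero]
  · have hcov : e ∈ E₁ ∨ e ∈ E₂ := mem_union.mp (hcover ▸ mem_univ e)
    rcases Int.units_eq_one_or (ε e) with h | h <;> simp only [h] <;> split_ifs <;> simp_all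

end

end Multigraph

open Multigraph

/-- Let `(G, σ)` be a signed graph.  If `(G, σ)` is the union of two balanced eulerian
subgraphs — i.e. there are edge sets `E₁, E₂` covering `E(G)` such that every vertex
is incident with an even number of edges of `Eᵢ` and the subgraph `(G[Eᵢ], σ)` is
balanced (every circuit within `Eᵢ` has an even number of negative edges), for
`i = 1, 2` — then `F(G, σ) ≤ 4`, i.e. `(G, σ)` admits an integer nowhere-zero
`4`-flow. -/
theorem stmt19 {V E : Type} [Fintype V] [Fintype E] [DecidableEq V] [DecidableEq E]
    (G : Multigraph V E) (σ : E → ℤˣ) (E₁ E₂ : Finset E)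
    (heul₁ : ∀ v, Even ((G.incEdges v ∩ E₁).card))
    (heul₂ : ∀ v, Even ((G.incEdges v ∩ E₂).card))
    (hcover : E₁ ∪ E₂ = Finset.univ)
    (hbal₁ : G.BalancedOn σ E₁) (hbal₂ : G.BalancedOn σ E₂) :
    G.HasIntNZFlow σ 4 := by
  obtain ⟨τ₁, hτ₁, hE₁⟩ := exists_isOrientation_isEulerianOn σ heul₁ hbal₁
  obtain ⟨τ₂, hτ₂, hE₂⟩ := exists_isOrientation_isEulerianOn σ heul₂ hbal₂
  exact hasIntNZFlow_four_of_isEulerianOn hτ₁ hτ₂ hE₁ hE₂ hcover
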